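/- A monotone function f : [n]^k → {−1,0,1}^k × {±1} (viewed as a sign function) is safe if and only if for every slice s ∈ ([n] ∪ {*})^k there exists a unique point x ∈ L_s such that f(x)_i = 0 for all free coordinates i ∈ F(s). -/

import Mathlib

/-- Symbols of the partial-information alphabet: −1, 0, 1, ≤, ≥, ◇. -/
inductive PISym : Type where
  | neg | zero | pos | sle | sge | dia
deriving DecidableEq

/-- Points of the `k`-dimensional grid, as integer vectors. -/
abbrev Pt (k : ℕ) := Fin k → ℤ

/-- `x ∈ [n]^k`. -/
def inGrid (n k : ℕ) (x : Pt k) : Prop := ∀ i, 1 ≤ x i ∧ x i ≤ (n : ℤ)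

/-- The `i`-th standard unit vector. -/
def eVec (k : ℕ) (i : Fin k) : Pt k := fun j => if j = i then 1 else 0

/-- A slice of `[n]^k`: `none` marks a free coordinate. -/
abbrev Slice (k : ℕ) := Fin k → Option ℤ

def fullSlice (k : ℕ) : Slice k := fun _ => none

def validSlice (n : ℕ) {k : ℕ} (s : Slice k) : Prop :=
  ∀ i v, s i = some v → 1 ≤ v ∧ v ≤ (n : ℤ)

def inSlice {k : ℕ} (s : Slice k) (x : Pt k) : Prop :=
  ∀ i v, s i = some v → x i = v

/-- Monotone partial-information function (Definition 2.4). -/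
def MonoPI (n k : ℕ) (p1 : Pt k → Fin k → PISym) (p2 : Pt k → PISym) : Prop :=
  (∀ x, inGrid n k x → p2 x = PISym.pos ∨ p2 x = PISym.neg ∨ p2 x = PISym.dia) ∧
  (∀ x y, inGrid n k x → inGrid n k y → ∀ i : Fin k,
    (p1 x i = PISym.pos → x ≤ y → y i = x i →
      p1 y i = PISym.pos ∧
        (y i < (n : ℤ) → p1 (y + eVec k i) i ∈ ({PISym.pos, PISym.zero, PISym.sge} : Set PISym))) ∧
    (p1 x i = PISym.neg → y ≤ x → y i = x i →
      p1 y i = PISym.neg ∧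
        (1 < y i → p1 (y - eVec k i) i ∈ ({PISym.neg, PISym.zero, PISym.sle} : Set PISym))) ∧
    (p1 x i = PISym.zero → y ≤ x → y i = x i →
      p1 y i ∈ ({PISym.zero, PISym.neg, PISym.sle} : Set PISym)) ∧
    (p1 x i = PISym.zero → x ≤ y → y i = x i →
      p1 y i ∈ ({PISym.zero, PISym.pos, PISym.sge} : Set PISym)) ∧
    (p1 x i = PISym.sle → y ≤ x → y i = x i → p1 y i ∈ ({PISym.neg, PISym.sle} : Set PISym)) ∧
    (p1 x i = PISym.sge → x ≤ y → y i = x i → p1 y i ∈ ({PISym.pos, PISym.sge} : Set PISym))) ∧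
  (∀ x, inGrid n k x → ∀ i : Fin k,
    (x i = 1 → p1 x i ∈ ({PISym.zero, PISym.pos, PISym.sge} : Set PISym)) ∧
    (x i = (n : ℤ) → p1 x i ∈ ({PISym.zero, PISym.neg, PISym.sle} : Set PISym))) ∧
  (∀ x y, inGrid n k x → inGrid n k y → x ≤ y →
    (p2 x = PISym.pos → p2 y = PISym.pos) ∧ (p2 y = PISym.neg → p2 x = PISym.neg))

/-- Postfixed points of a PI function on a slice. -/
def Post (n k : ℕ) (p1 : Pt k → Fin k → PISym) (s : Slice k) : Set (Pt k) :=
  {x | inGrid n k x ∧ inSlice s x ∧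
       ∀ i, s i = none → p1 x i ∈ ({PISym.pos, PISym.zero, PISym.sge} : Set PISym)}

/-- Prefixed points of a PI function on a slice. -/
def Pre (n k : ℕ) (p1 : Pt k → Fin k → PISym) (s : Slice k) : Set (Pt k) :=
  {x | inGrid n k x ∧ inSlice s x ∧
       ∀ i, s i = none → p1 x i ∈ ({PISym.neg, PISym.zero, PISym.sle} : Set PISym)}

/-- Safe PI functions (Definition 2.8). -/
def SafePI (n k : ℕ) (p1 : Pt k → Fin k → PISym) (p2 : Pt k → PISym) : Prop :=
  MonoPI n k p1 p2 ∧
  ∀ s : Slice k, validSlice n s →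
    (∀ J, IsGreatest (Post n k p1 s) J →
      ∀ x, inGrid n k x → inSlice s x → x ≤ J → x ≠ J →
        (∀ i, s i = none → x i < J i →
          p1 x i ∈ ({PISym.neg, PISym.zero, PISym.pos} : Set PISym)) ∧
        (∃ i, s i = none ∧ x i < J i ∧ p1 x i = PISym.pos)) ∧
    (∀ M, IsLeast (Pre n k p1 s) M →
      ∀ x, inGrid n k x → inSlice s x → M ≤ x → x ≠ M →
        (∀ i, s i = none → M i < x i →
          p1 x i ∈ ({PISym.neg, PISym.zero, PISym.pos} : Set PISym)) ∧
        (∃ i, s i = none ∧ M i < x i ∧ p1 x i = PISym.neg))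

/-- `x^{−i}` for `i ∈ [k]`. -/
def dminus {k : ℕ} (i : Fin k) (x : Pt k) : Pt k :=
  fun j => if j ≠ i ∧ 1 < x j then x j - 1 else x j

/-- `x^{−(k+1)}`. -/
def dminusAll {k : ℕ} (x : Pt k) : Pt k :=
  fun j => if 1 < x j then x j - 1 else x j

/-- `x^{+i}` for `i ∈ [k]`. -/
def dplus (n : ℕ) {k : ℕ} (i : Fin k) (x : Pt k) : Pt k :=
  fun j => if j ≠ i ∧ x j < (n : ℤ) then x j + 1 else x j

/-- `x^{+(k+1)}`. -/
def dplusAll (n : ℕ) {k : ℕ} (x : Pt k) : Pt k :=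
  fun j => if x j < (n : ℤ) then x j + 1 else x j

def IntPlus {k : ℕ} (p1 : Pt k → Fin k → PISym) (i : Fin k) : Set (Pt k) :=
  {x | p1 (dminus i x) i = PISym.pos}

def IntPlusLast {k : ℕ} (p1 : Pt k → Fin k → PISym) (p2 : Pt k → PISym) : Set (Pt k) :=
  {x | p2 (dminusAll x) = PISym.pos ∨
    ∃ i, p1 (dminus i x) i ∈ ({PISym.pos, PISym.zero, PISym.sge} : Set PISym) ∧
         p2 (dminus i x) = PISym.pos}

def IntMinus (n : ℕ) {k : ℕ} (p1 : Pt k → Fin k → PISym) (i : Fin k) : Set (Pt k) :=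
  {x | p1 (dplus n i x) i = PISym.neg}

def IntMinusLast (n : ℕ) {k : ℕ} (p1 : Pt k → Fin k → PISym) (p2 : Pt k → PISym) : Set (Pt k) :=
  {x | p2 (dplusAll n x) = PISym.neg ∨
    ∃ i, p1 (dplus n i x) i ∈ ({PISym.neg, PISym.zero, PISym.sle} : Set PISym) ∧
         p2 (dplus n i x) = PISym.neg}

/-- `Cand⁺(p)` relative to `J = J(p)` and `M = M(p)`. -/
def CandPlus (n k : ℕ) (p1 : Pt k → Fin k → PISym) (p2 : Pt k → PISym) (J M : Pt k) :
    Set (Pt k) :=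
  {x | inGrid n k x ∧ J ≤ x ∧ x ≤ M ∧
    (∀ i, p1 x i ≠ PISym.neg ∧ x ∉ IntPlus p1 i) ∧
    p2 x ≠ PISym.neg ∧ x ∉ IntPlusLast p1 p2}

/-- `Cand⁻(p)` relative to `J = J(p)` and `M = M(p)`. -/
def CandMinus (n k : ℕ) (p1 : Pt k → Fin k → PISym) (p2 : Pt k → PISym) (J M : Pt k) :
    Set (Pt k) :=
  {x | inGrid n k x ∧ J ≤ x ∧ x ≤ M ∧
    (∀ i, p1 x i ≠ PISym.pos ∧ x ∉ IntMinus n p1 i) ∧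
    p2 x ≠ PISym.pos ∧ x ∉ IntMinusLast n p1 p2}

/-- The information partial order on symbols: `symDom a b` means `a ⇒ b`. -/
def symDom (a b : PISym) : Prop :=
  b = PISym.dia ∨ a = b ∨ (a = PISym.pos ∧ b = PISym.sge) ∨
  (a = PISym.zero ∧ (b = PISym.sge ∨ b = PISym.sle)) ∨ (a = PISym.neg ∧ b = PISym.sle)

/-- `p ⇒ p'`: `p` dominates (is more informative than) `p'`. -/
def PIdom (n k : ℕ) (p1 : Pt k → Fin k → PISym) (p2 : Pt k → PISym)
    (q1 : Pt k → Fin k → PISym) (q2 : Pt k → PISym) : Prop :=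
  ∀ x, inGrid n k x → (∀ i, symDom (p1 x i) (q1 x i)) ∧ symDom (p2 x) (q2 x)

/-- A sign value `a ∈ {−1,0,1}` is consistent with a symbol `b`. -/
def consS (a : ℤ) (b : PISym) : Prop :=
  match b with
  | PISym.dia => True
  | PISym.pos => a = 1
  | PISym.neg => a = -1
  | PISym.zero => a = 0
  | PISym.sge => a = 0 ∨ a = 1
  | PISym.sle => a = -1 ∨ a = 0

/-- A sign function `f` is consistent with the PI function `p` (i.e., `f ⇒ p`). -/
def SignCons (n k : ℕ) (f1 : Pt k → Pt k) (f2 : Pt k → ℤ)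
    (p1 : Pt k → Fin k → PISym) (p2 : Pt k → PISym) : Prop :=
  ∀ x, inGrid n k x → (∀ i, consS (f1 x i) (p1 x i)) ∧ consS (f2 x) (p2 x)

/-- Monotone sign function: `x ↦ (x + f1 x, f2 x)` is well defined and monotone. -/
def MonoSign (n k : ℕ) (f1 : Pt k → Pt k) (f2 : Pt k → ℤ) : Prop :=
  (∀ x, inGrid n k x →
    (∀ i, f1 x i = -1 ∨ f1 x i = 0 ∨ f1 x i = 1) ∧ (f2 x = 1 ∨ f2 x = -1)) ∧
  (∀ x, inGrid n k x → inGrid n k (x + f1 x)) ∧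
  (∀ a b, inGrid n k a → inGrid n k b → a ≤ b → a + f1 a ≤ b + f1 b ∧ f2 a ≤ f2 b)

def PostF (n k : ℕ) (f1 : Pt k → Pt k) (s : Slice k) : Set (Pt k) :=
  {x | inGrid n k x ∧ inSlice s x ∧ ∀ i, s i = none → 0 ≤ f1 x i}

def PreF (n k : ℕ) (f1 : Pt k → Pt k) (s : Slice k) : Set (Pt k) :=
  {x | inGrid n k x ∧ inSlice s x ∧ ∀ i, s i = none → f1 x i ≤ 0}

/-- Safe sign functions (conditions (1') and (2') of Definition 2.8). -/
def SafeSign (n k : ℕ) (f1 : Pt k → Pt k) (f2 : Pt k → ℤ) : Prop :=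
  MonoSign n k f1 f2 ∧
  ∀ s : Slice k, validSlice n s →
    (∀ J, IsGreatest (PostF n k f1 s) J →
      ∀ x, inGrid n k x → inSlice s x → x ≤ J → x ≠ J →
        ∃ i, s i = none ∧ x i < J i ∧ f1 x i = 1) ∧
    (∀ M, IsLeast (PreF n k f1 s) M →
      ∀ x, inGrid n k x → inSlice s x → M ≤ x → x ≠ M →
        ∃ i, s i = none ∧ M i < x i ∧ f1 x i = -1)

/-- The revealed solutions of a PI function. -/
def SolPI (n k : ℕ) (p1 : Pt k → Fin k → PISym) (p2 : Pt k → PISym) : Set (Pt k) :=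
  {x | inGrid n k x ∧
    (((∀ i, p1 x i ∈ ({PISym.pos, PISym.zero, PISym.sge} : Set PISym)) ∧ p2 x = PISym.pos) ∨
     ((∀ i, p1 x i ∈ ({PISym.neg, PISym.zero, PISym.sle} : Set PISym)) ∧ p2 x = PISym.neg))}

/-- `x ≪_s y` : `x ⪯ y` with strict inequality in every free coordinate of `s`. -/
def lls {k : ℕ} (s : Slice k) (x y : Pt k) : Prop :=
  x ≤ y ∧ ∀ i, s i = none → x i < y i

/-- `s` is a slice witnessing `ŝ(x,p) ≠ nil`: `x ∈ L_s` and `x ≪_s J_s(p)`. -/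
def HasSlice (n k : ℕ) (p1 : Pt k → Fin k → PISym) (x : Pt k) (s : Slice k) : Prop :=
  validSlice n s ∧ inSlice s x ∧ ∃ J, IsGreatest (Post n k p1 s) J ∧ lls s x J

/-- `s = ŝ(x,p)`: `s` is the maximal slice with `x ∈ L_s` and `x ≪_s J_s(p)`. -/
def MaxSlice (n k : ℕ) (p1 : Pt k → Fin k → PISym) (x : Pt k) (s : Slice k) : Prop :=
  HasSlice n k p1 x s ∧
  ∀ s', HasSlice n k p1 x s' → ∀ i, s' i = none → s i = none

/-!
On a slice `s`, let `g_s` move the free coordinates of `x` by `f(x)` and keep the others. It is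
a monotone self-map of the finite lattice `L_s`, and `Post_s`, `Pre_s` and the zeros of `f` on `s`
are its post-fixed, pre-fixed and fixed points; so, as in Tarski's theorem, `J_s` and `M_s` exist
and are zeros of `f`. A unique zero on `s` thus forces `J_s = M_s`: every post-fixed point lies
below every pre-fixed point.

If `f` is safe, a zero `x ≠ J_s` (necessarily `x ≺ J_s`) would need some `f(x)_i = +1`, so `J_s`
is the only zero. Conversely, if `x ≺ J_s` violates (1'), then on the sub-slice freeing exactly
the coordinates where `x_i < (J_s)_i`, `J_s` is post-fixed and `x` is pre-fixed, whence
`J_s ⪯ x`, a contradiction; (2') is dual.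
-/

open Set

section FixedPoints

variable {α : Type*} [Lattice α] {L : Set α} {g : α → α}

lemma SupClosed.exists_isGreatest (hL : SupClosed L) (hfin : L.Finite) (hne : L.Nonempty) :
    ∃ a, IsGreatest L a :=
  ⟨hfin.toFinset.sup' (by simpa using hne) id, hL.finsetSup'_mem _ (by simp),
    fun _ hx => Finset.le_sup' id (by simpa using hx)⟩

lemma InfClosed.exists_isLeast (hL : InfClosed L) (hfin : L.Finite) (hne : L.Nonempty) :
    ∃ a, IsLeast L a :=
  SupClosed.exists_isGreatest (α := αᵒᵈ) hL hfin hne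

lemma SupClosed.postfixed (hL : SupClosed L) (hg : MonotoneOn g L) :
    SupClosed {x ∈ L | x ≤ g x} := fun _ hx _ hy =>
  ⟨hL hx.1 hy.1, sup_le_sup hx.2 hy.2 |>.trans <| sup_le
    (hg hx.1 (hL hx.1 hy.1) le_sup_left) (hg hy.1 (hL hx.1 hy.1) le_sup_right)⟩

lemma exists_isGreatest_postfixed_fixed (hfin : L.Finite) (hne : L.Nonempty)
    (hL : IsSublattice L) (hmaps : MapsTo g L L) (hg : MonotoneOn g L) :
    ∃ a, IsGreatest {x ∈ L | x ≤ g x} a ∧ g a = a := by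
  obtain ⟨b, hb⟩ := hL.2.exists_isLeast hfin hne
  obtain ⟨a, ha⟩ := (hL.1.postfixed hg).exists_isGreatest (hfin.subset fun _ hx => hx.1)
    ⟨b, hb.1, hb.2 (hmaps hb.1)⟩
  have hga : g a ∈ {x ∈ L | x ≤ g x} := ⟨hmaps ha.1.1, hg ha.1.1 (hmaps ha.1.1) ha.1.2⟩
  exact ⟨a, ha, le_antisymm (ha.2 hga) ha.1.2⟩

lemma exists_isLeast_prefixed_fixed (hfin : L.Finite) (hne : L.Nonempty)
    (hL : IsSublattice L) (hmaps : MapsTo g L L) (hg : MonotoneOn g L) :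
    ∃ a, IsLeast {x ∈ L | g x ≤ x} a ∧ g a = a :=
  exists_isGreatest_postfixed_fixed (α := αᵒᵈ) hfin hne ⟨hL.2, hL.1⟩ hmaps hg.dual

end FixedPoints

section Slices

variable {n k : ℕ} {f1 : Pt k → Pt k} {f2 : Pt k → ℤ} {s t : Slice k} {x y : Pt k}

def slicePoints (n : ℕ) {k : ℕ} (s : Slice k) : Set (Pt k) :=
  {x | inGrid n k x ∧ inSlice s x}

lemma slicePoints_finite : (slicePoints n s).Finite :=
  (Set.finite_Icc (1 : Pt k) n).subset fun _ hx => ⟨fun i => (hx.1 i).1, fun i => (hx.1 i).2⟩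

lemma slicePoints_nonempty (hn : 1 ≤ n) (hs : validSlice n s) : (slicePoints n s).Nonempty := by
  refine ⟨fun i => (s i).getD 1, fun i => ?_, fun i v hi => by simp [hi]⟩
  dsimp only
  cases hi : s i with
  | none => simpa using hn
  | some v => simpa using hs i v hi

lemma isSublattice_slicePoints : IsSublattice (slicePoints n s) :=
  ⟨fun x hx y hy => ⟨fun i => ⟨le_sup_of_le_left (hx.1 i).1, sup_le (hx.1 i).2 (hy.1 i).2⟩,
      fun i v hi => by simp [hx.2 i v hi, hy.2 i v hi]⟩,
    fun x hx y hy => ⟨fun i => ⟨le_inf (hx.1 i).1 (hy.1 i).1, inf_le_of_left_le (hx.1 i).2⟩,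
      fun i v hi => by simp [hx.2 i v hi, hy.2 i v hi]⟩⟩

def sliceMap (s : Slice k) (f1 : Pt k → Pt k) (x : Pt k) : Pt k :=
  fun i => if s i = none then x i + f1 x i else x i

lemma MonoSign.mapsTo_sliceMap (hf : MonoSign n k f1 f2) :
    MapsTo (sliceMap s f1) (slicePoints n s) (slicePoints n s) := by
  intro x ⟨hx, hxs⟩
  refine ⟨fun i => ?_, fun i v hi => by simp [sliceMap, hi, hxs i v hi]⟩
  by_cases hi : s i = none
  · simpa [sliceMap, hi] using hf.2.1 x hx i
  · simpa [sliceMap, hi] using hx i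

lemma MonoSign.monotoneOn_sliceMap (hf : MonoSign n k f1 f2) :
    MonotoneOn (sliceMap s f1) (slicePoints n s) := by
  intro x hx y hy hxy i
  by_cases hi : s i = none
  · simpa [sliceMap, hi] using (hf.2.2 x y hx.1 hy.1 hxy).1 i
  · simpa [sliceMap, hi] using hxy i

lemma postF_eq : PostF n k f1 s = {x ∈ slicePoints n s | x ≤ sliceMap s f1 x} := by
  ext x
  simp only [PostF, slicePoints, sliceMap, Pi.le_def, mem_ofPred_eq, and_assoc]
  refine and_congr_right fun _ => and_congr_right fun _ => forall_congr' fun i => ?_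
  by_cases hi : s i = none <;> simp [hi]

lemma preF_eq : PreF n k f1 s = {x ∈ slicePoints n s | sliceMap s f1 x ≤ x} := by
  ext x
  simp only [PreF, slicePoints, sliceMap, Pi.le_def, mem_ofPred_eq, and_assoc]
  refine and_congr_right fun _ => and_congr_right fun _ => forall_congr' fun i => ?_
  by_cases hi : s i = none <;> simp [hi]

lemma sliceMap_eq_self_iff : sliceMap s f1 x = x ↔ ∀ i, s i = none → f1 x i = 0 := by
  simp only [funext_iff, sliceMap]
  refine forall_congr' fun i => ?_
  by_cases hi : s i = none <;> simp [hi]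

lemma MonoSign.exists_isGreatest_postF (hf : MonoSign n k f1 f2) (hn : 1 ≤ n)
    (hs : validSlice n s) :
    ∃ J, IsGreatest (PostF n k f1 s) J ∧ ∀ i, s i = none → f1 J i = 0 := by
  simpa only [postF_eq, ← sliceMap_eq_self_iff] using
    exists_isGreatest_postfixed_fixed slicePoints_finite (slicePoints_nonempty hn hs)
      isSublattice_slicePoints hf.mapsTo_sliceMap hf.monotoneOn_sliceMap

lemma MonoSign.exists_isLeast_preF (hf : MonoSign n k f1 f2) (hn : 1 ≤ n)
    (hs : validSlice n s) :
    ∃ M, IsLeast (PreF n k f1 s) M ∧ ∀ i, s i = none → f1 M i = 0 := by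
  simpa only [preF_eq, ← sliceMap_eq_self_iff] using
    exists_isLeast_prefixed_fixed slicePoints_finite (slicePoints_nonempty hn hs)
      isSublattice_slicePoints hf.mapsTo_sliceMap hf.monotoneOn_sliceMap

lemma MonoSign.le_of_mem_postF_of_mem_preF (hf : MonoSign n k f1 f2) (hn : 1 ≤ n)
    (hs : validSlice n s)
    (huniq : ∃! x, inGrid n k x ∧ inSlice s x ∧ ∀ i, s i = none → f1 x i = 0)
    (hx : x ∈ PostF n k f1 s) (hy : y ∈ PreF n k f1 s) : x ≤ y := by
  obtain ⟨J, hJ, hJfix⟩ := hf.exists_isGreatest_postF hn hs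
  obtain ⟨M, hM, hMfix⟩ := hf.exists_isLeast_preF hn hs
  have hJM : J = M := huniq.unique ⟨hJ.1.1, hJ.1.2.1, hJfix⟩ ⟨hM.1.1, hM.1.2.1, hMfix⟩
  exact (hJ.2 hx).trans (hJM ▸ hM.2 hy)

lemma mem_postF_of_free_subset (hx : x ∈ PostF n k f1 s) (hxt : inSlice t x)
    (hts : ∀ i, t i = none → s i = none) : x ∈ PostF n k f1 t :=
  ⟨hx.1, hxt, fun i hi => hx.2.2 i (hts i hi)⟩

lemma mem_preF_of_free_subset (hx : x ∈ PreF n k f1 s) (hxt : inSlice t x)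
    (hts : ∀ i, t i = none → s i = none) : x ∈ PreF n k f1 t :=
  ⟨hx.1, hxt, fun i hi => hx.2.2 i (hts i hi)⟩

def diffSlice (s : Slice k) (x y : Pt k) : Slice k :=
  fun i => if s i = none ∧ x i ≠ y i then none else some (x i)

lemma diffSlice_eq_none_iff {i : Fin k} : diffSlice s x y i = none ↔ s i = none ∧ x i ≠ y i := by
  by_cases h : s i = none ∧ x i ≠ y i <;> simp [diffSlice, h]

lemma eq_of_diffSlice_eq_some {i : Fin k} {v : ℤ} (hi : diffSlice s x y i = some v) :
    x i = v ∧ (s i = none → x i = y i) := by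
  unfold diffSlice at hi
  split_ifs at hi with h
  exact ⟨Option.some_injective _ hi, fun hsi => not_not.1 fun hne => h ⟨hsi, hne⟩⟩

lemma validSlice_diffSlice (hx : inGrid n k x) : validSlice n (diffSlice s x y) :=
  fun i _ hi => (eq_of_diffSlice_eq_some hi).1 ▸ hx i

lemma inSlice_diffSlice_left : inSlice (diffSlice s x y) x :=
  fun _ _ hi => (eq_of_diffSlice_eq_some hi).1

lemma inSlice_diffSlice_right (hx : inSlice s x) (hy : inSlice s y) :
    inSlice (diffSlice s x y) y := by
  intro i v hi
  obtain ⟨rfl, hxy⟩ := eq_of_diffSlice_eq_some hi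
  rcases hsi : s i with _ | w
  · exact (hxy hsi).symm
  · rw [hx i w hsi, hy i w hsi]

lemma SafeSign.existsUnique_zero (hsafe : SafeSign n k f1 f2) (hn : 1 ≤ n)
    (hs : validSlice n s) :
    ∃! x, inGrid n k x ∧ inSlice s x ∧ ∀ i, s i = none → f1 x i = 0 := by
  obtain ⟨J, hJ, hJfix⟩ := hsafe.1.exists_isGreatest_postF hn hs
  refine ⟨J, ⟨hJ.1.1, hJ.1.2.1, hJfix⟩, fun x ⟨hx, hxs, hxfix⟩ => ?_⟩
  by_contra hne
  obtain ⟨i, hi, -, hxi⟩ := (hsafe.2 s hs).1 J hJ x hx hxs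
    (hJ.2 ⟨hx, hxs, fun i hi => (hxfix i hi).ge⟩) hne
  simp [hxfix i hi] at hxi

lemma MonoSign.exists_pos_of_lt_isGreatest_postF (hf : MonoSign n k f1 f2) (hn : 1 ≤ n)
    (huniq : ∀ s : Slice k, validSlice n s →
      ∃! x, inGrid n k x ∧ inSlice s x ∧ ∀ i, s i = none → f1 x i = 0)
    {J : Pt k} (hJ : IsGreatest (PostF n k f1 s) J) (hx : inGrid n k x) (hxs : inSlice s x)
    (hxJ : x ≤ J) (hne : x ≠ J) : ∃ i, s i = none ∧ x i < J i ∧ f1 x i = 1 := by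
  by_contra! h
  have hJt : J ∈ PostF n k f1 (diffSlice s x J) :=
    mem_postF_of_free_subset hJ.1 (inSlice_diffSlice_right hxs hJ.1.2.1)
      fun i hi => (diffSlice_eq_none_iff.1 hi).1
  have hxt : x ∈ PreF n k f1 (diffSlice s x J) := by
    refine ⟨hx, inSlice_diffSlice_left, fun i hi => ?_⟩
    obtain ⟨hsi, hxi⟩ := diffSlice_eq_none_iff.1 hi
    have := h i hsi (lt_of_le_of_ne (hxJ i) hxi)
    rcases (hf.1 x hx).1 i with h' | h' | h' <;> omega
  have hv := validSlice_diffSlice (s := s) (y := J) hx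
  exact hne (le_antisymm hxJ (hf.le_of_mem_postF_of_mem_preF hn hv (huniq _ hv) hJt hxt))

lemma MonoSign.exists_neg_of_isLeast_preF_lt (hf : MonoSign n k f1 f2) (hn : 1 ≤ n)
    (huniq : ∀ s : Slice k, validSlice n s →
      ∃! x, inGrid n k x ∧ inSlice s x ∧ ∀ i, s i = none → f1 x i = 0)
    {M : Pt k} (hM : IsLeast (PreF n k f1 s) M) (hx : inGrid n k x) (hxs : inSlice s x)
    (hMx : M ≤ x) (hne : x ≠ M) : ∃ i, s i = none ∧ M i < x i ∧ f1 x i = -1 := by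
  by_contra! h
  have hMt : M ∈ PreF n k f1 (diffSlice s x M) :=
    mem_preF_of_free_subset hM.1 (inSlice_diffSlice_right hxs hM.1.2.1)
      fun i hi => (diffSlice_eq_none_iff.1 hi).1
  have hxt : x ∈ PostF n k f1 (diffSlice s x M) := by
    refine ⟨hx, inSlice_diffSlice_left, fun i hi => ?_⟩
    obtain ⟨hsi, hxi⟩ := diffSlice_eq_none_iff.1 hi
    have := h i hsi (lt_of_le_of_ne (hMx i) (Ne.symm hxi))
    rcases (hf.1 x hx).1 i with h' | h' | h' <;> omega
  have hv := validSlice_diffSlice (s := s) (y := M) hx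
  exact hne (le_antisymm (hf.le_of_mem_postF_of_mem_preF hn hv (huniq _ hv) hxt hMt) hMx)

end Slices

/-- Lemma 2.10: a monotone sign function is safe iff it has a unique
fixed point on every slice. -/
theorem stmt4 (n k : ℕ) (hn : 1 ≤ n) (f1 : Pt k → Pt k) (f2 : Pt k → ℤ)
    (hf : MonoSign n k f1 f2) :
    SafeSign n k f1 f2 ↔
      ∀ s : Slice k, validSlice n s →
        ∃! x : Pt k, inGrid n k x ∧ inSlice s x ∧ ∀ i, s i = none → f1 x i = 0 :=
  ⟨fun hsafe _ hs => hsafe.existsUnique_zero hn hs, fun huniq =>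
    ⟨hf, fun _ _ => ⟨fun _ hJ _ => hf.exists_pos_of_lt_isGreatest_postF hn huniq hJ,
      fun _ hM _ => hf.exists_neg_of_isLeast_preF_lt hn huniq hM⟩⟩⟩
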